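/- For every m ∈ {0, 1, ..., b_n}, the total degree of the polynomial q_{n,m} equals m. In particular, among q_{n,0}, ..., q_{n,b_n} there is exactly one polynomial of total degree one, i.e. the D-invariant space Q = span{q_{n,m} : m = 0, ..., b_n} has breadth one. -/

import Mathlib

/-!
Each term of `q_{n,m}` is a monomial of degree `∑ᵢ |γᵢ| ≤ τ(γ) = m`, because every `b_j ≥ 1`.
Conversely, pick `i₀` with `c_{i₀,1} ≠ 0`. A term contributing to `x_{i₀}^m` has `∑ᵢ |γᵢ| = m = τ(γ)`,
so it puts no mass on the columns `j ≥ 2`, where `b_j ≥ 2`; hence it is `γ = m · e_{i₀,1}`, and the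
coefficient of `x_{i₀}^m` is `c_{i₀,1}^m / m! ≠ 0`.
-/

/-- The polynomial `q_{n,m}` from Theorem 2.2 (Li–Zhang):
`q_{n,m} = ∑_{τ(γ₁,…,γ_d)=m} (∏_{i,j} c_{i,j}^{γ_{i,j}}/γ_{i,j}!) · x₁^{|γ₁|} ⋯ x_d^{|γ_d|}`,
where `τ(γ₁,…,γ_d) = ∑_j b_j ∑_i γ_{i,j}`.  Since every `b_j ≥ 1`, every solution of
`τ(γ) = m` satisfies `γ_{i,j} ≤ m`, so the sum below ranges over all solutions. -/
noncomputable def qPoly (d n : ℕ) (b : Fin n → ℕ) (c : Fin d → Fin n → ℝ) (m : ℕ) :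
    MvPolynomial (Fin d) ℝ :=
  ∑ γ ∈ (Finset.Icc (0 : Fin d → Fin n → ℕ) fun _ _ => m).filter
      (fun γ => ∑ j, b j * ∑ i, γ i j = m),
    MvPolynomial.C (∏ i, ∏ j, c i j ^ γ i j / ((γ i j).factorial : ℝ)) *
      ∏ i, MvPolynomial.X i ^ (∑ j, γ i j)

open MvPolynomial Finset

lemma MvPolynomial.C_mul_prod_X_pow_eq_monomial {R σ : Type*} [CommSemiring R] [Fintype σ]
    (a : R) (e : σ → ℕ) :
    C a * ∏ i, (X i : MvPolynomial σ R) ^ e i = monomial (Finsupp.equivFunOnFinite.symm e) a := by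
  rw [monomial_eq, Finsupp.prod_fintype _ _ fun _ => pow_zero _]
  rfl

namespace QPoly

variable {d n : ℕ} {b : Fin n → ℕ} {c : Fin d → Fin n → ℝ} {m : ℕ} {i0 : Fin d} {j0 : Fin n}

def exponents (d : ℕ) (b : Fin n → ℕ) (m : ℕ) : Finset (Fin d → Fin n → ℕ) :=
  {γ ∈ Icc 0 fun _ _ => m | ∑ j, b j * ∑ i, γ i j = m}

noncomputable def rowSums (γ : Fin d → Fin n → ℕ) : Fin d →₀ ℕ :=
  Finsupp.equivFunOnFinite.symm fun i => ∑ j, γ i j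

noncomputable def coeffOf (c : Fin d → Fin n → ℝ) (γ : Fin d → Fin n → ℕ) : ℝ :=
  ∏ i, ∏ j, c i j ^ γ i j / ((γ i j).factorial : ℝ)

lemma qPoly_eq_sum_monomial :
    qPoly d n b c m = ∑ γ ∈ exponents d b m, monomial (rowSums γ) (coeffOf c γ) := by
  simp only [qPoly, C_mul_prod_X_pow_eq_monomial]
  rfl

lemma degree_rowSums (γ : Fin d → Fin n → ℕ) :
    ((rowSums γ).sum fun _ e => e) = ∑ j, ∑ i, γ i j := by
  rw [Finsupp.sum_fintype _ _ fun _ => rfl, sum_comm]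
  rfl

lemma totalDegree_qPoly_le (hb : ∀ j, 1 ≤ b j) (m : ℕ) : (qPoly d n b c m).totalDegree ≤ m := by
  rw [qPoly_eq_sum_monomial]
  refine (totalDegree_finsetSum _ _).trans (Finset.sup_le fun γ hγ => ?_)
  calc (monomial (rowSums γ) (coeffOf c γ)).totalDegree
      ≤ ∑ j, ∑ i, γ i j := (totalDegree_monomial_le _ _).trans_eq (degree_rowSums γ)
    _ ≤ ∑ j, b j * ∑ i, γ i j := by gcongr with j; exact Nat.le_mul_of_pos_left _ (hb j)
    _ = m := (mem_filter.mp hγ).2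

lemma single_single_mem_exponents (hb0 : b j0 = 1) :
    Pi.single i0 (Pi.single j0 m) ∈ exponents d b m := by
  have hcol (j : Fin n) : ∑ i, (Pi.single i0 (Pi.single j0 m) : Fin d → Fin n → ℕ) i j
      = (Pi.single j0 m : Fin n → ℕ) j :=
    (Fintype.sum_eq_single i0 fun i hi => by simp [hi]).trans (by simp)
  refine mem_filter.mpr ⟨mem_Icc.mpr ⟨zero_le, fun i j => ?_⟩, ?_⟩
  · rcases eq_or_ne i i0 with rfl | hi
    · rcases eq_or_ne j j0 with rfl | hj <;> simp [*]
    · simp [hi]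
  · simp only [hcol]
    rw [Fintype.sum_eq_single j0 fun j hj => by simp [hj]]
    simp [hb0]

lemma rowSums_single_single :
    rowSums (Pi.single i0 (Pi.single j0 m) : Fin d → Fin n → ℕ) = Finsupp.single i0 m := by
  ext i
  rcases eq_or_ne i i0 with rfl | hi
  · simp [rowSums]
  · simp [rowSums, hi]

lemma coeffOf_single_single :
    coeffOf c (Pi.single i0 (Pi.single j0 m)) = c i0 j0 ^ m / (m.factorial : ℝ) := by
  rw [coeffOf, prod_eq_single i0 fun i _ hi => by simp [hi],
    prod_eq_single j0 fun j _ hj => by simp [hj]] <;> simp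

lemma one_le_of_eq_one_of_two_le (hb0 : b j0 = 1) (hb : ∀ j ≠ j0, 2 ≤ b j) (j : Fin n) :
    1 ≤ b j := by
  rcases eq_or_ne j j0 with rfl | hj
  exacts [hb0.ge, one_le_two.trans (hb j hj)]

lemma eq_single_single_of_rowSums_eq_single (hb0 : b j0 = 1) (hb : ∀ j ≠ j0, 2 ≤ b j)
    {γ : Fin d → Fin n → ℕ} (hγ : γ ∈ exponents d b m)
    (hrow : rowSums γ = Finsupp.single i0 m) :
    γ = Pi.single i0 (Pi.single j0 m) := by
  have hrow' (i : Fin d) : ∑ j, γ i j = Finsupp.single i0 m i := DFunLike.congr_fun hrow i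
  have htotal : ∑ j, ∑ i, γ i j = ∑ j, b j * ∑ i, γ i j := by
    rw [(mem_filter.mp hγ).2, sum_comm]
    simp [hrow']
  have hcol : ∀ j ≠ j0, ∑ i, γ i j = 0 := by
    have hle (j : Fin n) (_ : j ∈ univ) : ∑ i, γ i j ≤ b j * ∑ i, γ i j :=
      Nat.le_mul_of_pos_left _ (one_le_of_eq_one_of_two_le hb0 hb j)
    intro j hj
    have h := (sum_eq_sum_iff_of_le hle).mp htotal j (mem_univ j)
    nlinarith [hb j hj]
  funext i j
  rcases eq_or_ne i i0 with rfl | hi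
  · rcases eq_or_ne j j0 with rfl | hj
    · rw [← Finsupp.single_eq_same (a := i) (b := m), ← hrow' i,
        Fintype.sum_eq_single j fun j' hj' => sum_eq_zero_iff.mp (hcol j' hj') i (mem_univ i)]
      simp
    · simpa [hj] using sum_eq_zero_iff.mp (hcol j hj) i (mem_univ i)
  · simpa [hi] using
      sum_eq_zero_iff.mp ((hrow' i).trans (Finsupp.single_eq_of_ne hi)) j (mem_univ j)

lemma coeff_single_qPoly (hb0 : b j0 = 1) (hb : ∀ j ≠ j0, 2 ≤ b j) :
    (qPoly d n b c m).coeff (Finsupp.single i0 m) = c i0 j0 ^ m / (m.factorial : ℝ) := by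
  rw [qPoly_eq_sum_monomial, coeff_sum, sum_eq_single_of_mem _ (single_single_mem_exponents hb0)]
  · rw [coeff_monomial, if_pos rowSums_single_single, coeffOf_single_single]
  · intro γ hγ hne
    rw [coeff_monomial,
      if_neg fun h => hne (eq_single_single_of_rowSums_eq_single hb0 hb hγ h)]

theorem totalDegree_qPoly (hb0 : b j0 = 1) (hb : ∀ j ≠ j0, 2 ≤ b j) (hc : c i0 j0 ≠ 0)
    (m : ℕ) : (qPoly d n b c m).totalDegree = m := by
  refine le_antisymm (totalDegree_qPoly_le (one_le_of_eq_one_of_two_le hb0 hb) m) ?_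
  have hcoeff : (qPoly d n b c m).coeff (Finsupp.single i0 m) ≠ 0 := by
    rw [coeff_single_qPoly hb0 hb]
    positivity
  simpa using le_totalDegree (mem_support_iff.mpr hcoeff)

end QPoly

/-- For every `m ∈ {0,…,b_n}`, the total degree of `q_{n,m}` equals `m`;
in particular among `q_{n,0},…,q_{n,b_n}` there is exactly one polynomial of total degree
one, i.e. the `D`-invariant space `Q` has breadth one. -/
theorem qPoly_totalDegree_eq_and_breadth_one
    (d n : ℕ) (hn : 1 ≤ n)
    (b : Fin n → ℕ) (c : Fin d → Fin n → ℝ)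
    (hb1 : b ⟨0, hn⟩ = 1)
    (hb2 : ∀ j : Fin n, 1 ≤ j.val → 2 ≤ b j)
    (hc : ∃ i : Fin d, c i ⟨0, hn⟩ ≠ 0) :
    (∀ m : ℕ, m ≤ b ⟨n - 1, by omega⟩ →
      (qPoly d n b c m).totalDegree = m) ∧
    (∃! m : ℕ, m ≤ b ⟨n - 1, by omega⟩ ∧ (qPoly d n b c m).totalDegree = 1) := by
  obtain ⟨i0, hi0⟩ := hc
  have hb (j : Fin n) (hj : j ≠ ⟨0, hn⟩) : 2 ≤ b j :=
    hb2 j (Nat.one_le_iff_ne_zero.mpr fun h => hj (Fin.ext h))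
  have key := QPoly.totalDegree_qPoly hb1 hb hi0
  exact ⟨fun m _ => key m, 1, ⟨QPoly.one_le_of_eq_one_of_two_le hb1 hb _, key 1⟩,
    fun m hm => (key m).symm.trans hm.2⟩
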